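/- The class of GFFN node functions is a strict subset of the class of GCNN node functions: every GFFN node function is realized by a GCNN node (with size-1 kernels), but there exists a GCNN node function (e.g., with a kernel of spatial extent 2 on signals over Fin 2) that is not equal to any GFFN node function. -/
import Mathlib

/-- The class of GFFN node functions (identity activation, zero bias) on single-channel
signals over `ℤ`: pointwise scalar multiples. -/
def GFFNclass : Set ((Fin 1 → (ℤ → ℝ)) → (ℤ → ℝ)) :=
  {g | ∃ w : ℝ, g = fun Z x => w * Z 0 x}

/-- The class of GCNN node functions (identity activation, zero bias) on single-channel
signals over `ℤ`, with finitely supported kernels. -/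
def GCNNclass : Set ((Fin 1 → (ℤ → ℝ)) → (ℤ → ℝ)) :=
  {g | ∃ F : ℤ →₀ ℝ, g = fun Z x => ∑ t ∈ F.support, F t * Z 0 (x - t)}

/-- GFFN node functions form a strict subset of GCNN node functions. -/
theorem gffn_ssubset_gcnn : GFFNclass ⊂ GCNNclass := by
  constructor
  · rintro g ⟨w, rfl⟩
    refine ⟨Finsupp.single 0 w, ?_⟩
    funext Z x
    have : ∑ t ∈ (Finsupp.single (0:ℤ) w).support,
        (Finsupp.single (0:ℤ) w) t * Z 0 (x - t)
        = (Finsupp.single (0:ℤ) w).sum (fun t a => a * Z 0 (x - t)) := rfl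
    rw [this, Finsupp.sum_single_index (by simp), sub_zero]
  · intro hsub
    have hmem : (fun Z x => ∑ t ∈ (Finsupp.single (1:ℤ) (1:ℝ)).support,
        (Finsupp.single (1:ℤ) (1:ℝ)) t * Z 0 (x - t)) ∈ GCNNclass :=
      ⟨Finsupp.single 1 1, rfl⟩
    obtain ⟨w, hw⟩ := hsub hmem
    have h := congrFun (congrFun hw (fun _ y => if y = 0 then (1:ℝ) else 0)) 1
    rw [Finsupp.support_single_ne_zero _ one_ne_zero, Finset.sum_singleton,
      Finsupp.single_eq_same] at h
    norm_num at h
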